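/- Let f : R → C be continuous, vanishing at infinity, with f(0) ≠ 0. Let (x_1,ω_1), (x_2,ω_2) ∈ R^2 with x_1 ≠ x_2, and suppose |f(t)| < |f(0)| whenever |t| > |x_1 - x_2| (in particular whenever |t| ≥ some R < |x_1-x_2|). Then exp(2πi ω_1 t) f(t - x_1) and exp(2πi ω_2 t) f(t - x_2) are linearly independent. -/

import Mathlib

open Complex

/-- `M_ω T_x f` in the usual time-frequency notation. -/
noncomputable def timeFreqShift (x ω : ℝ) (f : ℝ → ℂ) : ℝ → ℂ :=
  fun t => exp (2 * Real.pi * I * ((ω * t : ℝ) : ℂ)) * f (t - x)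

lemma norm_timeFreqShift_apply (x ω : ℝ) (f : ℝ → ℂ) (t : ℝ) :
    ‖timeFreqShift x ω f t‖ = ‖f (t - x)‖ := by
  have h : 2 * Real.pi * I * ((ω * t : ℝ) : ℂ) = ((2 * Real.pi * ω * t : ℝ) : ℂ) * I := by
    push_cast; ring
  rw [timeFreqShift, norm_mul, h, norm_exp_ofReal_mul_I, one_mul]

lemma norm_mul_eq_of_smul_add_smul_timeFreqShift_eq_zero {f : ℝ → ℂ} {x₁ ω₁ x₂ ω₂ : ℝ}
    {s t : ℂ} (h : s • timeFreqShift x₁ ω₁ f + t • timeFreqShift x₂ ω₂ f = 0) (v : ℝ) :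
    ‖s‖ * ‖f v‖ = ‖t‖ * ‖f (v + (x₁ - x₂))‖ := by
  have hv : s * timeFreqShift x₁ ω₁ f (v + x₁) = -(t * timeFreqShift x₂ ω₂ f (v + x₁)) :=
    eq_neg_of_add_eq_zero_left (by simpa using congrFun h (v + x₁))
  have := congrArg norm hv
  rwa [norm_neg, norm_mul, norm_mul, norm_timeFreqShift_apply, norm_timeFreqShift_apply,
    add_sub_cancel_right, add_sub_assoc] at this

/-- Two steps of length `d` in either direction give `a² g 0 = b² g (2d)` and
`b² g 0 = a² g (-2d)`, which the decay makes incompatible unless `b = 0`. -/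
lemma eq_zero_of_mul_eq_mul_shift {g : ℝ → ℝ} {a b d : ℝ} (hd : d ≠ 0) (hg0 : g 0 ≠ 0)
    (hdecay : ∀ u, |d| < |u| → g u < g 0) (h : ∀ v, a * g v = b * g (v + d)) :
    a = 0 ∧ b = 0 := by
  have hd2 : |d| < |2 * d| := by
    rw [abs_mul, abs_two]; linarith [abs_pos.mpr hd]
  have hforward : a ^ 2 * g 0 = b ^ 2 * g (2 * d) := by
    have h0 := h 0
    have h1 := h d
    rw [zero_add] at h0
    rw [← two_mul] at h1
    linear_combination a * h0 + b * h1
  have hbackward : b ^ 2 * g 0 = a ^ 2 * g (-(2 * d)) := by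
    have h0 := h (-d)
    have h1 := h (-(2 * d))
    rw [neg_add_cancel] at h0
    rw [show -(2 * d) + d = -d by ring] at h1
    linear_combination -(b * h0) - a * h1
  have hb : b = 0 := by
    by_contra hb
    have hlt : b ^ 2 * g (2 * d) < b ^ 2 * g 0 :=
      mul_lt_mul_of_pos_left (hdecay _ hd2) (by positivity)
    have hle : a ^ 2 * g (-(2 * d)) ≤ a ^ 2 * g 0 :=
      mul_le_mul_of_nonneg_left (hdecay _ (by rwa [abs_neg])).le (sq_nonneg a)
    linarith
  refine ⟨?_, hb⟩
  have h0 := h 0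
  rw [hb, zero_mul] at h0
  exact (mul_eq_zero.mp h0).resolve_right hg0

theorem stmt_17_general (f : ℝ → ℂ)
    (hf0 : f 0 ≠ 0)
    (x₁ ω₁ x₂ ω₂ : ℝ) (hx : x₁ ≠ x₂)
    (hdecay : ∀ t : ℝ, |x₁ - x₂| < |t| → ‖f t‖ < ‖f 0‖) :
    LinearIndependent ℂ
      ![(fun t => Complex.exp (2 * Real.pi * Complex.I * ((ω₁ * t : ℝ) : ℂ)) *
          f (t - x₁) : ℝ → ℂ),
        (fun t => Complex.exp (2 * Real.pi * Complex.I * ((ω₂ * t : ℝ) : ℂ)) *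
          f (t - x₂) : ℝ → ℂ)] := by
  change LinearIndependent ℂ ![timeFreqShift x₁ ω₁ f, timeFreqShift x₂ ω₂ f]
  rw [LinearIndependent.pair_iff]
  intro s t hst
  obtain ⟨hs, ht⟩ := eq_zero_of_mul_eq_mul_shift (sub_ne_zero.mpr hx) (norm_pos_iff.mpr hf0).ne'
    hdecay (norm_mul_eq_of_smul_add_smul_timeFreqShift_eq_zero hst)
  exact ⟨norm_eq_zero.mp hs, norm_eq_zero.mp ht⟩

/-- The `N = 2` case of Theorem 1: two time-frequency translates of an
`f ∈ C₀(ℝ)` with `f 0 ≠ 0` and `|f t| < |f 0|` for `|t| > |x₁ - x₂|` are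
linearly independent. -/
theorem stmt_17 (f : ℝ → ℂ) (hf : Continuous f)
    (hC0 : Filter.Tendsto f (Filter.cocompact ℝ) (nhds 0))
    (hf0 : f 0 ≠ 0)
    (x₁ ω₁ x₂ ω₂ : ℝ) (hx : x₁ ≠ x₂)
    (hdecay : ∀ t : ℝ, |x₁ - x₂| < |t| → ‖f t‖ < ‖f 0‖) :
    LinearIndependent ℂ
      ![(fun t => Complex.exp (2 * Real.pi * Complex.I * ((ω₁ * t : ℝ) : ℂ)) *
          f (t - x₁) : ℝ → ℂ),
        (fun t => Complex.exp (2 * Real.pi * Complex.I * ((ω₂ * t : ℝ) : ℂ)) *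
          f (t - x₂) : ℝ → ℂ)] :=
  stmt_17_general f hf0 x₁ ω₁ x₂ ω₂ hx hdecay
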